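/- arXiv:2305.12205 — 4 statements merged into one kernel-verified Lean document; each statement's English description precedes it below -/
import Mathlib

section
/- Let T = F_n ∘ ... ∘ F_1 be a composition of n continuous functions, where each F_i is defined on an open domain D_i ⊆ ℝ^d with F_i(D_i) ⊆ D_{i+1}. Suppose 𝓕 is a class of continuous functions such that each F_i can be uniformly approximated on any compact subset of D_i by functions in 𝓕. Then for any compact K ⊆ D_1 and any ε > 0, there exist functions F̃_1, ..., F̃_n in 𝓕 such that ‖T(x) − (F̃_n ∘ ... ∘ F̃_1)(x)‖ ≤ ε for all x ∈ K. -/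
open Function

/-- Left-to-right composition of a finite sequence of maps: applies `F 0` first. -/
def compSeq {E : Type*} {n : ℕ} (F : Fin n → E → E) (x : E) : E :=
  (List.ofFn F).foldl (fun y f => f y) x

lemma compSeq_zero {E : Type*} (F : Fin 0 → E → E) (x : E) : compSeq F x = x := by
  simp [compSeq]

lemma compSeq_succ {E : Type*} {n : ℕ} (F : Fin (n + 1) → E → E) (x : E) :
    compSeq F x = F (Fin.last n) (compSeq (fun i => F i.castSucc) x) := by
  rw [compSeq, compSeq, List.ofFn_succ', List.concat_eq_append, List.foldl_concat]

lemma compSeq_mapsTo_contOn {E : Type*} [TopologicalSpace E] {n : ℕ}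
    (F : Fin n → E → E) (D : Fin (n + 1) → Set E)
    (hFcont : ∀ i : Fin n, ContinuousOn (F i) (D i.castSucc))
    (hFmaps : ∀ i : Fin n, Set.MapsTo (F i) (D i.castSucc) (D i.succ)) :
    Set.MapsTo (compSeq F) (D 0) (D (Fin.last n)) ∧ ContinuousOn (compSeq F) (D 0) := by
  induction n with
  | zero =>
    constructor
    · intro x hx
      simpa [compSeq_zero] using hx
    · exact continuousOn_id.congr (fun x _ => compSeq_zero F x)
  | succ n IH =>
    obtain ⟨hmaps, hcont⟩ := IH (fun i => F i.castSucc) (fun i => D i.castSucc)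
      (fun i => hFcont i.castSucc)
      (fun i => by have := hFmaps i.castSucc; rwa [Fin.succ_castSucc] at this)
    have h0 : ((0 : Fin (n + 1)).castSucc : Fin (n + 2)) = 0 := rfl
    rw [h0] at hmaps hcont
    constructor
    · intro x hx
      rw [compSeq_succ]
      have := hFmaps (Fin.last n) (hmaps hx)
      simpa [Fin.succ_last] using this
    · have : ContinuousOn (fun x => F (Fin.last n) (compSeq (fun i => F i.castSucc) x)) (D 0) :=
        (hFcont (Fin.last n)).comp hcont hmaps
      exact this.congr (fun x _ => compSeq_succ F x)

theorem composition_approximation {d n : ℕ}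
    (F : Fin n → EuclideanSpace ℝ (Fin d) → EuclideanSpace ℝ (Fin d))
    (D : Fin (n + 1) → Set (EuclideanSpace ℝ (Fin d)))
    (hDopen : ∀ i, IsOpen (D i))
    (hFcont : ∀ i : Fin n, ContinuousOn (F i) (D i.castSucc))
    (hFmaps : ∀ i : Fin n, Set.MapsTo (F i) (D i.castSucc) (D i.succ))
    (𝓕 : Set (EuclideanSpace ℝ (Fin d) → EuclideanSpace ℝ (Fin d)))
    (h𝓕cont : ∀ g ∈ 𝓕, Continuous g)
    (happrox : ∀ i : Fin n, ∀ K : Set (EuclideanSpace ℝ (Fin d)),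
      IsCompact K → K ⊆ D i.castSucc → ∀ ε > 0,
        ∃ g ∈ 𝓕, ∀ x ∈ K, ‖F i x - g x‖ ≤ ε)
    (K : Set (EuclideanSpace ℝ (Fin d))) (hK : IsCompact K) (hKD : K ⊆ D 0)
    (ε : ℝ) (hε : 0 < ε) :
    ∃ G : Fin n → EuclideanSpace ℝ (Fin d) → EuclideanSpace ℝ (Fin d),
      (∀ i, G i ∈ 𝓕) ∧ ∀ x ∈ K, ‖compSeq F x - compSeq G x‖ ≤ ε := by
  induction n generalizing K ε with
  | zero =>
    refine ⟨Fin.elim0, fun i => i.elim0, fun x hx => ?_⟩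
    simp [compSeq_zero, hε.le]
  | succ n IH =>
    -- auxiliary data for the first n maps
    set F' : Fin n → EuclideanSpace ℝ (Fin d) → EuclideanSpace ℝ (Fin d) :=
      fun i => F i.castSucc with hF'
    set D' : Fin (n + 1) → Set (EuclideanSpace ℝ (Fin d)) := fun i => D i.castSucc with hD'
    have hF'cont : ∀ i : Fin n, ContinuousOn (F' i) (D' i.castSucc) :=
      fun i => hFcont i.castSucc
    have hF'maps : ∀ i : Fin n, Set.MapsTo (F' i) (D' i.castSucc) (D' i.succ) :=
      fun i => by have := hFmaps i.castSucc; rwa [Fin.succ_castSucc] at this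
    obtain ⟨hmaps, hcont⟩ := compSeq_mapsTo_contOn F' D' hF'cont hF'maps
    have h0 : D' 0 = D 0 := rfl
    rw [h0] at hmaps hcont
    -- K' = image of K under composition of first n maps
    set K' : Set (EuclideanSpace ℝ (Fin d)) := compSeq F' '' K with hK'
    have hK'comp : IsCompact K' := hK.image_of_continuousOn (hcont.mono hKD)
    have hK'sub : K' ⊆ D (Fin.last n).castSucc := by
      rintro _ ⟨x, hx, rfl⟩
      exact hmaps (hKD hx)
    obtain ⟨δ, hδpos, hδ⟩ :=
      hK'comp.exists_cthickening_subset_open (hDopen (Fin.last n).castSucc) hK'sub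
    set L := Metric.cthickening δ K' with hL
    have hLcomp : IsCompact L := hK'comp.cthickening
    have hLsub : L ⊆ D (Fin.last n).castSucc := hδ
    -- uniform continuity of F (last n) on L
    have hucont : UniformContinuousOn (F (Fin.last n)) L :=
      hLcomp.uniformContinuousOn_of_continuous ((hFcont (Fin.last n)).mono hLsub)
    obtain ⟨η, hηpos, hη⟩ := Metric.uniformContinuousOn_iff.mp hucont (ε / 2) (by positivity)
    -- apply IH with ε' = min δ η / 2
    set ε' : ℝ := min δ η / 2 with hε'
    have hε'pos : 0 < ε' := by positivity
    have happrox' : ∀ i : Fin n, ∀ K : Set (EuclideanSpace ℝ (Fin d)),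
        IsCompact K → K ⊆ D' i.castSucc → ∀ ε > 0,
          ∃ g ∈ 𝓕, ∀ x ∈ K, ‖F' i x - g x‖ ≤ ε :=
      fun i => happrox i.castSucc
    obtain ⟨G', hG'mem, hG'bound⟩ := IH F' D' (fun i => hDopen i.castSucc) hF'cont hF'maps
      happrox' K hK hKD ε' hε'pos
    -- approximate the last map on L
    obtain ⟨g, hgmem, hgbound⟩ :=
      happrox (Fin.last n) L hLcomp hLsub (ε / 2) (by positivity)
    refine ⟨Fin.snoc G' g, ?_, ?_⟩
    · intro i
      refine Fin.lastCases ?_ (fun j => ?_) i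
      · simpa using hgmem
      · simpa using hG'mem j
    · intro x hx
      have hGsucc : compSeq (Fin.snoc G' g : Fin (n+1) → _) x = g (compSeq G' x) := by
        rw [compSeq_succ]
        simp
      have ha : compSeq F' x ∈ K' := ⟨x, hx, rfl⟩
      have haL : compSeq F' x ∈ L := Metric.self_subset_cthickening _ ha
      have hab : dist (compSeq G' x) (compSeq F' x) ≤ ε' := by
        rw [dist_eq_norm, ← norm_neg]
        simpa using hG'bound x hx
      have hmin : 0 < min δ η := lt_min hδpos hηpos
      have hbL : compSeq G' x ∈ L :=
        Metric.mem_cthickening_of_dist_le _ _ δ _ ha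
          (hab.trans (by rw [hε']; have := min_le_left δ η; linarith))
      have h1 : dist (F (Fin.last n) (compSeq F' x)) (F (Fin.last n) (compSeq G' x)) < ε / 2 := by
        refine hη _ haL _ hbL ?_
        rw [dist_comm]
        exact hab.trans_lt (by rw [hε']; have := min_le_right δ η; linarith)
      have h2 : dist (F (Fin.last n) (compSeq G' x)) (g (compSeq G' x)) ≤ ε / 2 := by
        rw [dist_eq_norm]
        exact hgbound _ hbL
      rw [compSeq_succ F x, hGsucc, ← dist_eq_norm]
      calc dist (F (Fin.last n) (compSeq F' x)) (g (compSeq G' x))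
          ≤ dist (F (Fin.last n) (compSeq F' x)) (F (Fin.last n) (compSeq G' x))
            + dist (F (Fin.last n) (compSeq G' x)) (g (compSeq G' x)) := dist_triangle _ _ _
        _ ≤ ε / 2 + ε / 2 := add_le_add h1.le h2
        _ = ε := by ring
end

section
/- For real numbers α > 0 and β > 0, the solution of the scalar ODE x'(t) = σ_{α,β}(x(t)) with x(0) = x₀, where σ_{α,β}(x) = αx for x < 0 and σ_{α,β}(x) = βx for x ≥ 0, is given at time τ ≥ 0 by x(τ) = σ_{e^{τα}, e^{τβ}}(x₀). In other words, the time-τ flow map of the generalized leaky-ReLU field σ_{α,β} is the generalized leaky-ReLU function σ_{e^{τα}, e^{τβ}}. -/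
/-- Generalized leaky-ReLU: `α x` for `x < 0`, `β x` for `x ≥ 0`. -/
noncomputable def glReLU (α β : ℝ) (x : ℝ) : ℝ := if x < 0 then α * x else β * x

lemma glReLU_lipschitz (α β : ℝ) (hα : 0 < α) (hβ : 0 < β) :
    LipschitzWith (Real.toNNReal (max α β)) (glReLU α β) := by
  apply LipschitzWith.of_dist_le_mul
  intro x y
  simp only [Real.dist_eq, Real.coe_toNNReal _ (le_max_iff.2 (Or.inl hα.le))]
  unfold glReLU
  have hK1 : α ≤ max α β := le_max_left _ _
  have hK2 : β ≤ max α β := le_max_right _ _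
  rcases lt_or_ge x 0 with hx | hx <;> rcases lt_or_ge y 0 with hy | hy
  · rw [if_pos hx, if_pos hy, ← mul_sub, abs_mul, abs_of_pos hα]
    exact mul_le_mul_of_nonneg_right hK1 (abs_nonneg _)
  · rw [if_pos hx, if_neg (not_lt.2 hy)]
    have : |α * x - β * y| ≤ max α β * (y - x) := by
      rw [abs_sub_comm, abs_of_nonneg (by nlinarith)]
      nlinarith
    calc |α * x - β * y| ≤ max α β * (y - x) := this
      _ ≤ max α β * |x - y| := by
          apply mul_le_mul_of_nonneg_left _ (le_trans hα.le hK1)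
          rw [abs_sub_comm]; exact le_abs_self _
  · rw [if_neg (not_lt.2 hx), if_pos hy]
    have : |β * x - α * y| ≤ max α β * (x - y) := by
      rw [abs_of_nonneg (by nlinarith)]; nlinarith
    exact this.trans (mul_le_mul_of_nonneg_left (le_abs_self _) (le_trans hα.le hK1))
  · rw [if_neg (not_lt.2 hx), if_neg (not_lt.2 hy), ← mul_sub, abs_mul, abs_of_pos hβ]
    exact mul_le_mul_of_nonneg_right hK2 (abs_nonneg _)

theorem flow_of_leakyReLU_field (α β : ℝ) (hα : 0 < α) (hβ : 0 < β)
    (x₀ : ℝ) (x : ℝ → ℝ) (hx0 : x 0 = x₀)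
    (hode : ∀ t : ℝ, HasDerivAt x (glReLU α β (x t)) t)
    (τ : ℝ) (hτ : 0 ≤ τ) :
    x τ = glReLU (Real.exp (τ * α)) (Real.exp (τ * β)) x₀ := by
  set g : ℝ → ℝ := fun t => glReLU (Real.exp (t * α)) (Real.exp (t * β)) x₀ with hg
  have hgode : ∀ t : ℝ, HasDerivAt g (glReLU α β (g t)) t := by
    intro t
    rcases lt_or_ge x₀ 0 with h0 | h0
    · have hgeq : g = fun t => Real.exp (t * α) * x₀ := by
        funext s
        simp only [hg, glReLU, if_pos (mul_neg_of_pos_of_neg (Real.exp_pos _) h0)]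
        rw [if_pos h0]
      rw [hgeq]
      have hd : HasDerivAt (fun s => Real.exp (s * α) * x₀)
          (Real.exp (t * α) * α * x₀) t := by
        have := ((hasDerivAt_id t).mul_const α).exp
        simpa using this.mul_const x₀
      convert hd using 1
      rw [glReLU, if_pos (mul_neg_of_pos_of_neg (Real.exp_pos _) h0)]
      ring
    · have hgeq : g = fun t => Real.exp (t * β) * x₀ := by
        funext s
        simp only [hg, glReLU, if_neg (not_lt.2 (mul_nonneg (Real.exp_pos _).le h0))]
        rw [if_neg (not_lt.2 h0)]
      rw [hgeq]
      have hd : HasDerivAt (fun s => Real.exp (s * β) * x₀)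
          (Real.exp (t * β) * β * x₀) t := by
        have := ((hasDerivAt_id t).mul_const β).exp
        simpa using this.mul_const x₀
      convert hd using 1
      rw [glReLU, if_neg (not_lt.2 (mul_nonneg (Real.exp_pos _).le h0))]
      ring
  have key : Set.EqOn x g (Set.Icc 0 τ) := by
    apply ODE_solution_unique (v := fun _ => glReLU α β)
      (fun _ => glReLU_lipschitz α β hα hβ)
      (fun t _ => (hode t).continuousAt.continuousWithinAt)
      (fun t _ => (hode t).hasDerivWithinAt)
      (fun t _ => (hgode t).continuousAt.continuousWithinAt)
      (fun t _ => (hgode t).hasDerivWithinAt)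
    simp [hg, glReLU, hx0]
  exact key (Set.right_mem_Icc.2 hτ)
end

section
/- Let v: ℝ^d → ℝ^d be Lipschitz continuous, let Ω ⊂ ℝ^d be compact, and let φ_v^t denote the time-t flow map of x' = v(x). For any t > 0 and ε > 0, there exist positive integers p and q such that ‖φ_v^t(x) − (φ_v^1)^{∘p} ∘ (φ_{−v}^{√2})^{∘q}(x)‖ < ε for all x ∈ Ω. -/
open Function
open Set

private lemma flow_uniq' {E : Type*} [NormedAddCommGroup E] [NormedSpace ℝ E]
    {w : E → E} {K : NNReal} (hw : LipschitzWith K w) {f g : ℝ → E}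
    (hf : ∀ s, HasDerivAt f (w (f s)) s) (hg : ∀ s, HasDerivAt g (w (g s)) s)
    (h0 : f 0 = g 0) (s : ℝ) : f s = g s := by
  have hR : s ∈ Ioo (-(|s|+1)) (|s|+1) :=
    ⟨by cases abs_cases s <;> linarith, by cases abs_cases s <;> linarith⟩
  exact ODE_solution_unique_of_mem_Ioo (v := fun _ x => w x) (s := fun _ => Set.univ)
    (fun _ _ => hw.lipschitzOnWith)
    (t₀ := 0) ⟨by have : (0:ℝ) ≤ |s| := abs_nonneg s; linarith, by have : (0:ℝ) ≤ |s| := abs_nonneg s; linarith⟩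
    (fun u _ => ⟨hf u, trivial⟩) (fun u _ => ⟨hg u, trivial⟩) h0 hR

private lemma kron_aux (t δ : ℝ) (ht : 0 < t) (hδ : 0 < δ) (hδ1 : δ < 1) :
    ∃ p q : ℕ, 0 < p ∧ 0 < q ∧ |t - ((p : ℝ) - q * Real.sqrt 2)| < δ := by
  set β := Real.sqrt 2 with hβdef
  have hβsq : β ^ 2 = 2 := Real.sq_sqrt (by norm_num)
  have hβ0 : 0 ≤ β := Real.sqrt_nonneg 2
  have hβ1 : 1 < β := by nlinarith
  have hβ2 : β < 2 := by nlinarith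
  -- Step 1: find a b : ℤ with 1 ≤ a, 1 ≤ b and (a : ℝ) - b * β ∈ Ioc 0 (δ/2)
  have step1 : ∃ a b : ℤ, 1 ≤ a ∧ 1 ≤ b ∧ (a : ℝ) - b * β ∈ Ioc 0 (δ/2) := by
    set S : AddSubgroup ℝ := AddSubgroup.zmultiples (1:ℝ) ⊔ AddSubgroup.zmultiples β with hS
    have hdense : Dense (S : Set ℝ) := by
      rcases S.dense_or_cyclic with hd | ⟨c, hc⟩
      · exact hd
      · exfalso
        have h1 : (1:ℝ) ∈ S := AddSubgroup.mem_sup_left (AddSubgroup.mem_zmultiples 1)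
        have h2 : β ∈ S := AddSubgroup.mem_sup_right (AddSubgroup.mem_zmultiples β)
        rw [hc, AddSubgroup.mem_closure_singleton] at h1 h2
        obtain ⟨m, hm⟩ := h1
        obtain ⟨n, hn⟩ := h2
        rw [zsmul_eq_mul] at hm hn
        have hm0 : (m:ℝ) ≠ 0 := by
          intro h; rw [h, zero_mul] at hm; norm_num at hm
        have : β = ((n : ℚ) / (m : ℚ) : ℚ) := by
          push_cast
          rw [eq_div_iff hm0]
          linear_combination (n : ℝ) * hm - (m : ℝ) * hn
        exact irrational_sqrt_two ⟨_, this.symm⟩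
    obtain ⟨g, hgS, hg0, hgδ⟩ := dense_iff_exists_between.mp hdense 0 (δ/2) (by positivity)
    replace hgS : g ∈ (AddSubgroup.zmultiples (1:ℝ) ⊔ AddSubgroup.zmultiples β) := hgS
    rw [AddSubgroup.mem_sup] at hgS
    obtain ⟨y, hy, z, hz, hyz⟩ := hgS
    rw [AddSubgroup.mem_zmultiples_iff] at hy hz
    obtain ⟨m, hm⟩ := hy
    obtain ⟨n, hn⟩ := hz
    rw [zsmul_eq_mul, mul_one] at hm
    rw [zsmul_eq_mul] at hn
    have hg_eq : g = (m : ℝ) + n * β := by rw [← hyz, ← hm, ← hn]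
    rcases lt_trichotomy n 0 with hn0 | hn0 | hn0
    · -- n < 0 : take a = m, b = -n, h = g
      refine ⟨m, -n, ?_, by omega, ?_⟩
      · have hbpos : (0:ℝ) < ((-n : ℤ):ℝ) := by exact_mod_cast (by omega : (0:ℤ) < -n)
        have hmr : (0:ℝ) < (m:ℝ) := by
          have he : (m:ℝ) = g + ((-n:ℤ):ℝ) * β := by push_cast; rw [hg_eq]; ring
          rw [he]; nlinarith
        have : (0:ℤ) < m := by exact_mod_cast hmr
        omega
      · have he : ((m:ℤ):ℝ) - ((-n : ℤ):ℝ) * β = g := by push_cast; rw [hg_eq]; ring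
        rw [Set.mem_Ioc, he]
        exact ⟨hg0, hgδ.le⟩
    · -- n = 0 : g is an integer in (0,1), contradiction
      exfalso
      subst hn0
      rw [hg_eq] at hg0 hgδ
      simp only [Int.cast_zero, zero_mul, add_zero] at hg0 hgδ
      have h1 : 0 < m := by exact_mod_cast hg0
      have h2 : (m:ℝ) < 1 := lt_of_lt_of_le hgδ (by linarith)
      have : m < 1 := by exact_mod_cast h2
      omega
    · -- n > 0 : use w = 2 - β and subtract multiples of g
      set k : ℤ := ⌈(2 - β) / g⌉ - 1 with hk
      have hw0 : (0:ℝ) < 2 - β := by linarith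
      have hk0 : 0 ≤ k := by
        have : 0 < (2 - β) / g := by positivity
        have := Int.ceil_pos.mpr this
        omega
      have hkg1 : (k : ℝ) * g < 2 - β := by
        have h1 : (k : ℝ) < (2 - β) / g := by
          rw [hk]; push_cast
          have := Int.ceil_lt_add_one ((2 - β) / g)
          linarith
        calc (k:ℝ) * g < ((2-β)/g) * g := by exact mul_lt_mul_of_pos_right h1 hg0
        _ = 2 - β := by field_simp
      have hkg2 : 2 - β - (k:ℝ) * g ≤ g := by
        have h1 : (2 - β) / g ≤ (k : ℝ) + 1 := by
          rw [hk]; push_cast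
          have := Int.le_ceil ((2 - β) / g)
          linarith
        have := mul_le_mul_of_nonneg_right h1 hg0.le
        rw [div_mul_cancel₀ _ (ne_of_gt hg0)] at this
        linarith
      refine ⟨2 - k * m, 1 + k * n, ?_, by nlinarith, ?_, ?_⟩
      · -- a ≥ 1 since (a:ℝ) = h + b β > 0
        have hab : ((2 - k * m : ℤ) : ℝ) = (2 - β - k * g) + ((1 + k*n : ℤ):ℝ) * β := by
          push_cast; rw [hg_eq]; ring
        have hbpos : (0:ℝ) < ((1 + k*n : ℤ):ℝ) := by
          exact_mod_cast (by nlinarith : (0:ℤ) < 1 + k * n)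
        have : (0:ℝ) < ((2 - k * m : ℤ) : ℝ) := by
          rw [hab]; nlinarith
        exact_mod_cast this
      · show (0:ℝ) < ((2 - k*m : ℤ):ℝ) - ((1 + k*n : ℤ):ℝ) * β
        have : ((2 - k*m : ℤ):ℝ) - ((1 + k*n : ℤ):ℝ) * β = 2 - β - k * g := by
          push_cast; rw [hg_eq]; ring
        rw [this]; linarith
      · show ((2 - k*m : ℤ):ℝ) - ((1 + k*n : ℤ):ℝ) * β ≤ δ/2
        have : ((2 - k*m : ℤ):ℝ) - ((1 + k*n : ℤ):ℝ) * β = 2 - β - k * g := by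
          push_cast; rw [hg_eq]; ring
        rw [this]; linarith
  obtain ⟨a, b, ha, hb, hh0, hhδ⟩ := step1
  set h : ℝ := (a : ℝ) - b * β with hhdef
  -- Step 2: multiply up
  set k₀ : ℤ := ⌊t / h⌋ + 1 with hk₀
  have hk₀1 : 1 ≤ k₀ := by
    have : 0 ≤ ⌊t / h⌋ := Int.floor_nonneg.mpr (by positivity)
    omega
  have hkh1 : t < (k₀ : ℝ) * h := by
    have : t / h < (k₀ : ℝ) := by
      rw [hk₀]; push_cast; exact Int.lt_floor_add_one _
    calc t = (t / h) * h := by field_simp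
    _ < (k₀:ℝ) * h := mul_lt_mul_of_pos_right this hh0
  have hkh2 : (k₀ : ℝ) * h ≤ t + h := by
    have : (k₀ : ℝ) ≤ t / h + 1 := by
      rw [hk₀]; push_cast
      have := Int.floor_le (t / h); linarith
    have := mul_le_mul_of_nonneg_right this hh0.le
    rw [add_mul, div_mul_cancel₀ _ (ne_of_gt hh0), one_mul] at this
    linarith
  refine ⟨(k₀ * a).toNat, (k₀ * b).toNat, ?_, ?_, ?_⟩
  · have : (0:ℤ) < k₀ * a := by positivity
    omega
  · have : (0:ℤ) < k₀ * b := by positivity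
    omega
  · have hca : (((k₀ * a).toNat : ℕ) : ℝ) = (k₀ : ℝ) * a := by
      have h2 : ((k₀ * a).toNat : ℤ) = k₀ * a := Int.toNat_of_nonneg (by positivity)
      exact_mod_cast congrArg (fun z : ℤ => (z : ℝ)) h2
    have hcb : (((k₀ * b).toNat : ℕ) : ℝ) = (k₀ : ℝ) * b := by
      have h2 : ((k₀ * b).toNat : ℤ) = k₀ * b := Int.toNat_of_nonneg (by positivity)
      exact_mod_cast congrArg (fun z : ℤ => (z : ℝ)) h2
    rw [hca, hcb]
    have : (k₀:ℝ) * a - (k₀:ℝ) * b * β = (k₀:ℝ) * h := by rw [hhdef]; ring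
    rw [this, abs_sub_comm, abs_of_nonneg (by linarith)]
    linarith

private lemma gb_mono' {K ε x y : ℝ} (hK : 0 ≤ K) (hε : 0 ≤ ε) (hxy : x ≤ y) :
    gronwallBound 0 K ε x ≤ gronwallBound 0 K ε y := by
  by_cases hK0 : K = 0
  · simp only [gronwallBound, if_pos hK0, zero_add]
    exact mul_le_mul_of_nonneg_left hxy hε
  · have hKpos : 0 < K := lt_of_le_of_ne hK (Ne.symm hK0)
    simp only [gronwallBound, if_neg hK0, zero_mul, zero_add]
    have hexp : Real.exp (K * x) ≤ Real.exp (K * y) :=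
      Real.exp_le_exp.mpr (mul_le_mul_of_nonneg_left hxy hK)
    have hd : 0 ≤ ε / K := by positivity
    nlinarith

private lemma gb_nonneg' {K ε x : ℝ} (hK : 0 ≤ K) (hε : 0 ≤ ε) (hx : 0 ≤ x) :
    0 ≤ gronwallBound 0 K ε x := by
  have := gb_mono' hK hε hx
  rwa [gronwallBound_x0] at this

theorem flow_kronecker_approx {d : ℕ} (v : EuclideanSpace ℝ (Fin d) → EuclideanSpace ℝ (Fin d))
    (L : NNReal) (hv : LipschitzWith L v)
    (Ω : Set (EuclideanSpace ℝ (Fin d))) (hΩ : IsCompact Ω)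
    (φ ψ : ℝ → EuclideanSpace ℝ (Fin d) → EuclideanSpace ℝ (Fin d))
    (hφ0 : ∀ x₀, φ 0 x₀ = x₀)
    (hφ : ∀ x₀, ∀ s : ℝ, HasDerivAt (fun u => φ u x₀) (v (φ s x₀)) s)
    (hψ0 : ∀ x₀, ψ 0 x₀ = x₀)
    (hψ : ∀ x₀, ∀ s : ℝ, HasDerivAt (fun u => ψ u x₀) (-v (ψ s x₀)) s)
    (t ε : ℝ) (ht : 0 < t) (hε : 0 < ε) :
    ∃ p q : ℕ, 0 < p ∧ 0 < q ∧ ∀ x ∈ Ω,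
      ‖φ t x - (φ 1)^[p] ((ψ (Real.sqrt 2))^[q] x)‖ < ε := by
  classical
  set β := Real.sqrt 2 with hβdef
  -- the negated vector field is Lipschitz
  have hvneg : LipschitzWith L (fun y => -v y) := fun x y => by
    simpa [edist_neg_neg] using hv x y
  -- derivative of u ↦ φ (-u) x
  have hφneg : ∀ x, ∀ u : ℝ, HasDerivAt (fun u => φ (-u) x) (-v (φ (-u) x)) u := by
    intro x u
    have h1 := hφ x (-u)
    have h2 : HasDerivAt (fun u : ℝ => -u) (-1) u := hasDerivAt_neg u
    have h3 := HasDerivAt.scomp u h1 h2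
    simpa [Function.comp_def, neg_one_smul] using h3
  -- group law for the flow
  have hgrp : ∀ (a c : ℝ) (x : EuclideanSpace ℝ (Fin d)), φ a (φ c x) = φ (a + c) x := by
    intro a c x
    have hf : ∀ s : ℝ, HasDerivAt (fun u => φ (u + c) x) (v (φ (s + c) x)) s := by
      intro s
      have h1 := hφ x (s + c)
      have h2 : HasDerivAt (fun u : ℝ => u + c) 1 s := (hasDerivAt_id s).add_const c
      have h3 := HasDerivAt.scomp s h1 h2
      simpa [Function.comp_def] using h3
    have hg : ∀ s : ℝ, HasDerivAt (fun u => φ u (φ c x)) (v (φ s (φ c x))) s := hφ _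
    exact (flow_uniq' hv hf hg (by simp [hφ0]) a).symm
  -- ψ is the reversed flow
  have hψφ : ∀ (s : ℝ) (x : EuclideanSpace ℝ (Fin d)), ψ s x = φ (-s) x := by
    intro s x
    exact flow_uniq' hvneg (hψ x) (hφneg x) (by simp [hφ0, hψ0]) s
  -- iterates
  have hiterφ : ∀ (p : ℕ) (y : EuclideanSpace ℝ (Fin d)), (φ 1)^[p] y = φ (p : ℝ) y := by
    intro p
    induction p with
    | zero => intro y; simp [hφ0]
    | succ n ih =>
      intro y
      rw [Function.iterate_succ_apply, ih (φ 1 y), hgrp]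
      push_cast
      rfl
  have hiterψ : ∀ (q : ℕ) (y : EuclideanSpace ℝ (Fin d)),
      (ψ β)^[q] y = φ (-((q : ℝ) * β)) y := by
    intro q
    induction q with
    | zero => intro y; simp [hφ0]
    | succ n ih =>
      intro y
      rw [Function.iterate_succ_apply, ih (ψ β y), hψφ β y, hgrp]
      push_cast
      ring_nf
  have hcomb : ∀ (p q : ℕ) (x : EuclideanSpace ℝ (Fin d)),
      (φ 1)^[p] ((ψ β)^[q] x) = φ ((p : ℝ) - q * β) x := by
    intro p q x
    rw [hiterψ, hiterφ, hgrp]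
    congr 1
  -- bound on ‖v‖ over Ω
  obtain ⟨M₀', hM₀'⟩ := hΩ.exists_bound_of_continuousOn hv.continuous.continuousOn
  set M₀ : ℝ := max M₀' 0 with hM₀def
  have hM₀0 : 0 ≤ M₀ := le_max_right _ _
  have hM₀ : ∀ x ∈ Ω, ‖v x‖ ≤ M₀ := fun x hx => (hM₀' x hx).trans (le_max_left _ _)
  set T : ℝ := t + 1 with hT
  have hT0 : 0 < T := by linarith
  set R : ℝ := gronwallBound 0 L M₀ T with hRdef
  have hR0 : 0 ≤ R := gb_nonneg' L.coe_nonneg hM₀0 hT0.le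
  have hlip : ∀ y x : EuclideanSpace ℝ (Fin d), ‖v y - v x‖ ≤ L * ‖y - x‖ := by
    intro y x
    have := hv.dist_le_mul y x
    simpa [dist_eq_norm] using this
  -- Gronwall estimate, forward time
  have keypos : ∀ x ∈ Ω, ∀ u ∈ Set.Icc (0:ℝ) T, ‖φ u x - x‖ ≤ R := by
    intro x hx u hu
    have base := norm_le_gronwallBound_of_norm_deriv_right_le
      (f := fun u => φ u x - x) (f' := fun u => v (φ u x))
      (δ := 0) (K := L) (ε := M₀) (a := 0) (b := T)
      (fun u _ => ((hφ x u).sub_const x).continuousAt.continuousWithinAt)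
      (fun u _ => ((hφ x u).sub_const x).hasDerivWithinAt)
      (by simp [hφ0])
      (fun u _ => by
        calc ‖v (φ u x)‖ = ‖(v (φ u x) - v x) + v x‖ := by rw [sub_add_cancel]
          _ ≤ ‖v (φ u x) - v x‖ + ‖v x‖ := norm_add_le _ _
          _ ≤ (L : ℝ) * ‖φ u x - x‖ + M₀ := add_le_add (hlip _ _) (hM₀ x hx))
    have h1 := base u hu
    rw [sub_zero] at h1
    exact h1.trans (gb_mono' L.coe_nonneg hM₀0 hu.2)
  -- Gronwall estimate, backward time
  have keyneg : ∀ x ∈ Ω, ∀ u ∈ Set.Icc (0:ℝ) T, ‖φ (-u) x - x‖ ≤ R := by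
    intro x hx u hu
    have base := norm_le_gronwallBound_of_norm_deriv_right_le
      (f := fun u => φ (-u) x - x) (f' := fun u => -v (φ (-u) x))
      (δ := 0) (K := L) (ε := M₀) (a := 0) (b := T)
      (fun u _ => ((hφneg x u).sub_const x).continuousAt.continuousWithinAt)
      (fun u _ => ((hφneg x u).sub_const x).hasDerivWithinAt)
      (by simp [hφ0])
      (fun u _ => by
        rw [norm_neg]
        calc ‖v (φ (-u) x)‖ = ‖(v (φ (-u) x) - v x) + v x‖ := by rw [sub_add_cancel]
          _ ≤ ‖v (φ (-u) x) - v x‖ + ‖v x‖ := norm_add_le _ _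
          _ ≤ (L : ℝ) * ‖φ (-u) x - x‖ + M₀ := add_le_add (hlip _ _) (hM₀ x hx))
    have h1 := base u hu
    rw [sub_zero] at h1
    exact h1.trans (gb_mono' L.coe_nonneg hM₀0 hu.2)
  -- bound on ‖v (φ u x)‖ for u ∈ [-T, T]
  have hbnd : ∀ x ∈ Ω, ∀ u ∈ Set.Icc (-T) T, ‖v (φ u x)‖ ≤ M₀ + L * R := by
    intro x hx u hu
    have hnorm : ‖φ u x - x‖ ≤ R := by
      rcases le_total 0 u with h | h
      · exact keypos x hx u ⟨h, hu.2⟩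
      · have h2 := keyneg x hx (-u) ⟨by linarith, by linarith [hu.1]⟩
        simpa using h2
    have h3 : ‖v (φ u x) - v x‖ ≤ L * ‖φ u x - x‖ := hlip _ _
    have h4 : (L : ℝ) * ‖φ u x - x‖ ≤ L * R := mul_le_mul_of_nonneg_left hnorm L.coe_nonneg
    calc ‖v (φ u x)‖ = ‖(v (φ u x) - v x) + v x‖ := by rw [sub_add_cancel]
      _ ≤ ‖v (φ u x) - v x‖ + ‖v x‖ := norm_add_le _ _
      _ ≤ M₀ + L * R := by have := hM₀ x hx; linarith
  set M : ℝ := M₀ + L * R + 1 with hMdef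
  have hMpos : 0 < M := by
    have : (0:ℝ) ≤ (L : ℝ) * R := mul_nonneg L.coe_nonneg hR0
    rw [hMdef]; linarith
  -- choose δ and p, q via Kronecker
  set δ : ℝ := min (1/2) (ε / (2 * M)) with hδdef
  have hδpos : 0 < δ := lt_min (by norm_num) (by positivity)
  have hδ1 : δ < 1 := lt_of_le_of_lt (min_le_left _ _) (by norm_num)
  have hδhalf : δ ≤ 1/2 := min_le_left _ _
  have hδε : δ ≤ ε / (2 * M) := min_le_right _ _
  obtain ⟨p, q, hp, hq, happ⟩ := kron_aux t δ ht hδpos hδ1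
  refine ⟨p, q, hp, hq, ?_⟩
  intro x hx
  rw [← hβdef] at happ
  rw [hcomb p q x]
  set θ : ℝ := (p : ℝ) - q * β with hθdef
  have habs := abs_lt.mp happ
  have hθT : θ ∈ Set.Icc (-T) T := by
    constructor
    · rw [hT]; linarith [habs.2]
    · rw [hT]; linarith [habs.1]
  have htT : t ∈ Set.Icc (-T) T := ⟨by rw [hT]; linarith, by rw [hT]; linarith⟩
  have est := Convex.norm_image_sub_le_of_norm_hasDerivWithin_le
    (f := fun u => φ u x) (f' := fun u => v (φ u x)) (s := Set.Icc (-T) T) (C := M)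
    (fun u _ => (hφ x u).hasDerivWithinAt)
    (fun u hu => (hbnd x hx u hu).trans (by rw [hMdef]; linarith))
    (convex_Icc _ _) hθT htT
  have est' : ‖φ t x - φ θ x‖ ≤ M * |t - θ| := by
    simpa [Real.norm_eq_abs] using est
  calc ‖φ t x - φ θ x‖ ≤ M * |t - θ| := est'
    _ < M * δ := by exact mul_lt_mul_of_pos_left happ hMpos
    _ ≤ M * (ε / (2 * M)) := mul_le_mul_of_nonneg_left hδε hMpos.le
    _ = ε / 2 := by field_simp
    _ < ε := by linarith
end

section
/- Let v₁, ..., v_m: ℝ^d → ℝ^d be Lipschitz continuous, v = v₁ + ... + v_m, and Ω ⊂ ℝ^d compact. For any t > 0 and ε > 0, there exists a positive integer n such that ‖φ_v^t(x) − ((φ_{v_m}^{t/n} ∘ ... ∘ φ_{v_1}^{t/n}))^{∘n}(x)‖ < ε for all x ∈ Ω. -/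
open Function Set Real

section aux

variable {E : Type*} [NormedAddCommGroup E] [NormedSpace ℝ E] [CompleteSpace E]

omit [CompleteSpace E] in
private lemma flow_continuous {u : E → E} {ψ : ℝ → E}
    (hψ : ∀ s, HasDerivAt ψ (u (ψ s)) s) : Continuous ψ :=
  continuous_iff_continuousAt.2 fun s => (hψ s).continuousAt

private lemma flow_sub_eq_integral {u : E → E} (hu : Continuous u) {ψ : ℝ → E}
    (hψ : ∀ s, HasDerivAt ψ (u (ψ s)) s) (h : ℝ) :
    ψ h - ψ 0 = ∫ s in (0:ℝ)..h, u (ψ s) := by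
  have hc : Continuous fun s => u (ψ s) := hu.comp (flow_continuous hψ)
  rw [intervalIntegral.integral_eq_sub_of_hasDerivAt (fun s _ => hψ s)
    (hc.intervalIntegrable _ _)]

private lemma flow_move_bound {u : E → E} (hu : Continuous u) {ψ : ℝ → E}
    (hψ : ∀ s, HasDerivAt ψ (u (ψ s)) s) {h M : ℝ} (hh : 0 ≤ h)
    (hM : ∀ s ∈ Icc (0:ℝ) h, ‖u (ψ s)‖ ≤ M) : ‖ψ h - ψ 0‖ ≤ M * h := by
  rw [flow_sub_eq_integral hu hψ h]
  have := intervalIntegral.norm_integral_le_of_norm_le_const (C := M)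
    (f := fun s => u (ψ s)) (a := (0:ℝ)) (b := h) ?_
  · simpa [abs_of_nonneg hh] using this
  · intro s hs
    rw [uIoc_of_le hh] at hs
    exact hM s ⟨le_of_lt hs.1, hs.2⟩

private lemma flow_taylor_bound {u : E → E} {Lu : NNReal} (hu : LipschitzWith Lu u)
    {ψ : ℝ → E} (hψ : ∀ s, HasDerivAt ψ (u (ψ s)) s) {h M : ℝ} (hh : 0 ≤ h)
    (hM : ∀ s ∈ Icc (0:ℝ) h, ‖u (ψ s)‖ ≤ M) :
    ‖ψ h - ψ 0 - h • u (ψ 0)‖ ≤ Lu * M * h ^ 2 := by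
  have hc : Continuous fun s => u (ψ s) := hu.continuous.comp (flow_continuous hψ)
  have key : ψ h - ψ 0 - h • u (ψ 0) = ∫ s in (0:ℝ)..h, (u (ψ s) - u (ψ 0)) := by
    rw [intervalIntegral.integral_sub (hc.intervalIntegrable _ _)
      (intervalIntegrable_const), intervalIntegral.integral_const,
      ← flow_sub_eq_integral hu.continuous hψ h]
    simp
  rw [key]
  have bound : ∀ s ∈ uIoc (0:ℝ) h, ‖u (ψ s) - u (ψ 0)‖ ≤ (Lu * (M * h)) := by
    intro s hs
    rw [uIoc_of_le hh] at hs
    have h1 : ‖u (ψ s) - u (ψ 0)‖ ≤ Lu * ‖ψ s - ψ 0‖ := by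
      have := hu.dist_le_mul (ψ s) (ψ 0)
      simpa [dist_eq_norm] using this
    have h2 : ‖ψ s - ψ 0‖ ≤ M * s :=
      flow_move_bound hu.continuous hψ hs.1.le
        (fun r hr => hM r ⟨hr.1, hr.2.trans hs.2⟩)
    have hM0 : 0 ≤ M := le_trans (norm_nonneg _) (hM 0 ⟨le_refl _, hh⟩)
    calc ‖u (ψ s) - u (ψ 0)‖ ≤ (Lu : ℝ) * (M * s) :=
          h1.trans (by gcongr)
      _ ≤ Lu * (M * h) := by gcongr; exact hs.2
  have := intervalIntegral.norm_integral_le_of_norm_le_const bound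
  calc ‖∫ s in (0:ℝ)..h, (u (ψ s) - u (ψ 0))‖ ≤ Lu * (M * h) * |h - 0| := this
    _ = Lu * M * h ^ 2 := by rw [sub_zero, abs_of_nonneg hh]; ring

omit [CompleteSpace E] in
private lemma flow_norm_gronwall {u : E → E} {ψ : ℝ → E}
    (hψ : ∀ s, HasDerivAt ψ (u (ψ s)) s) {A Kr : ℝ}
    (hgrow : ∀ y, ‖u y‖ ≤ A + Kr * ‖y‖) {h : ℝ} (hh : 0 ≤ h) :
    ‖ψ h‖ ≤ gronwallBound ‖ψ 0‖ Kr A h := by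
  have := norm_le_gronwallBound_of_norm_deriv_right_le (f := ψ)
    (f' := fun s => u (ψ s)) (a := 0) (b := h) (δ := ‖ψ 0‖) (K := Kr) (ε := A)
    ((flow_continuous hψ).continuousOn)
    (fun s _ => (hψ s).hasDerivWithinAt) le_rfl
    (fun s _ => by have := hgrow (ψ s); linarith)
  simpa using this h ⟨hh, le_refl _⟩

omit [CompleteSpace E] in
private lemma flow_lipschitz {u : E → E} {Lu : NNReal} (hu : LipschitzWith Lu u)
    {ψ χ : ℝ → E} (hψ : ∀ s, HasDerivAt ψ (u (ψ s)) s)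
    (hχ : ∀ s, HasDerivAt χ (u (χ s)) s) {h : ℝ} (hh : 0 ≤ h) :
    ‖ψ h - χ h‖ ≤ ‖ψ 0 - χ 0‖ * exp (Lu * h) := by
  have := dist_le_of_trajectories_ODE (v := fun _ y => u y) (K := Lu)
    (f := ψ) (g := χ) (a := 0) (b := h) (δ := dist (ψ 0) (χ 0))
    (fun _ => hu) ((flow_continuous hψ).continuousOn)
    (fun s _ => (hψ s).hasDerivWithinAt) ((flow_continuous hχ).continuousOn)
    (fun s _ => (hχ s).hasDerivWithinAt) le_rfl h ⟨hh, le_refl _⟩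
  simpa [dist_eq_norm] using this

private lemma gb_nonneg {δ Kr A x : ℝ} (hδ : 0 ≤ δ) (hK : 0 ≤ Kr) (hA : 0 ≤ A)
    (hx : 0 ≤ x) : 0 ≤ gronwallBound δ Kr A x := by
  unfold gronwallBound
  split_ifs with h
  · nlinarith
  · have h1 : (1:ℝ) ≤ exp (Kr * x) := one_le_exp (by positivity)
    have h2 : 0 < Kr := lt_of_le_of_ne hK (Ne.symm h)
    have : 0 ≤ A / Kr := by positivity
    nlinarith [exp_pos (Kr * x)]

private lemma gb_mono_x {δ Kr A x y : ℝ} (hδ : 0 ≤ δ) (hK : 0 ≤ Kr) (hA : 0 ≤ A)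
    (hxy : x ≤ y) (hx : 0 ≤ x) : gronwallBound δ Kr A x ≤ gronwallBound δ Kr A y := by
  unfold gronwallBound
  split_ifs with h
  · nlinarith
  · have h2 : 0 < Kr := lt_of_le_of_ne hK (Ne.symm h)
    have he : exp (Kr * x) ≤ exp (Kr * y) := exp_le_exp.2 (by nlinarith)
    have : 0 ≤ A / Kr := by positivity
    nlinarith

private lemma gb_mono_δ {δ δ' Kr A x : ℝ} (hδ : δ ≤ δ') (hx : 0 ≤ x) (hK : 0 ≤ Kr) :
    gronwallBound δ Kr A x ≤ gronwallBound δ' Kr A x := by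
  unfold gronwallBound
  split_ifs with h
  · linarith
  · have he : (0:ℝ) < exp (Kr * x) := exp_pos _
    nlinarith

private lemma gb_add (δ Kr A a b : ℝ) :
    gronwallBound (gronwallBound δ Kr A a) Kr A b = gronwallBound δ Kr A (a + b) := by
  unfold gronwallBound
  split_ifs with h
  · ring
  · rw [mul_add, exp_add]; ring

private lemma list_sum_map_nonneg {ι : Type*} (l : List ι) (c : ι → ℝ)
    (hc : ∀ i, 0 ≤ c i) : 0 ≤ (l.map c).sum := by
  induction l with
  | nil => simp
  | cons i l' ih => simp only [List.map_cons, List.sum_cons]; exact add_nonneg (hc i) ih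

private lemma list_sum_diff_bound {ι : Type*} (l : List ι) (f g : ι → E) (c : ι → ℝ)
    (hc : ∀ i, ‖f i - g i‖ ≤ c i) :
    ‖(l.map f).sum - (l.map g).sum‖ ≤ (l.map c).sum := by
  induction l with
  | nil => simp
  | cons i l' ih =>
    simp only [List.map_cons, List.sum_cons]
    calc ‖f i + (l'.map f).sum - (g i + (l'.map g).sum)‖
        = ‖(f i - g i) + ((l'.map f).sum - (l'.map g).sum)‖ := by congr 1; abel
      _ ≤ ‖f i - g i‖ + ‖(l'.map f).sum - (l'.map g).sum‖ := norm_add_le _ _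
      _ ≤ c i + (l'.map c).sum := add_le_add (hc i) ih

private lemma list_sum_map_mul_right {ι : Type*} (l : List ι) (c : ι → ℝ) (a : ℝ) :
    (l.map fun i => c i * a).sum = (l.map c).sum * a := by
  induction l with
  | nil => simp
  | cons i l' ih => simp only [List.map_cons, List.sum_cons, ih]; ring

end aux

set_option maxHeartbeats 2000000 in
theorem splitting_convergence {d m : ℕ}
    (v : Fin m → EuclideanSpace ℝ (Fin d) → EuclideanSpace ℝ (Fin d))
    (L : Fin m → NNReal) (hv : ∀ i, LipschitzWith (L i) (v i))
    (Ω : Set (EuclideanSpace ℝ (Fin d))) (hΩ : IsCompact Ω)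
    (φ : ℝ → EuclideanSpace ℝ (Fin d) → EuclideanSpace ℝ (Fin d))
    (hφ0 : ∀ x₀, φ 0 x₀ = x₀)
    (hφ : ∀ x₀, ∀ s : ℝ, HasDerivAt (fun u => φ u x₀) (∑ i, v i (φ s x₀)) s)
    (Φ : Fin m → ℝ → EuclideanSpace ℝ (Fin d) → EuclideanSpace ℝ (Fin d))
    (hΦ0 : ∀ i x₀, Φ i 0 x₀ = x₀)
    (hΦ : ∀ i x₀, ∀ s : ℝ, HasDerivAt (fun u => Φ i u x₀) (v i (Φ i s x₀)) s)
    (t ε : ℝ) (ht : 0 < t) (hε : 0 < ε) :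
    ∃ n : ℕ, 0 < n ∧ ∀ x ∈ Ω,
      ‖φ t x -
        (fun y => (List.ofFn fun i => Φ i (t / n)).foldl (fun z f => f z) y)^[n] x‖ < ε := by
  classical
  obtain ⟨R₀', hR₀'⟩ := isBounded_iff_forall_norm_le.1 hΩ.isBounded
  set R₀ : ℝ := max R₀' 0 with hR₀def
  have hR₀nn : 0 ≤ R₀ := le_max_right _ _
  have hR₀ : ∀ x ∈ Ω, ‖x‖ ≤ R₀ := fun x hx => (hR₀' x hx).trans (le_max_left _ _)
  set Kr : ℝ := ∑ i, (L i : ℝ) with hKrdef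
  have hKr0 : 0 ≤ Kr := Finset.sum_nonneg fun i _ => (L i).coe_nonneg
  set K' : NNReal := ∑ i, L i with hK'def
  have hK'coe : (K' : ℝ) = Kr := by rw [hK'def, hKrdef, NNReal.coe_sum]
  set A : ℝ := ∑ i, ‖v i (0 : EuclideanSpace ℝ (Fin d))‖ with hAdef
  have hA0 : 0 ≤ A := Finset.sum_nonneg fun i _ => norm_nonneg _
  have hgrow_each : ∀ i y, ‖v i y‖ ≤ ‖v i 0‖ + (L i : ℝ) * ‖y‖ := by
    intro i y
    have h1 : ‖v i y - v i 0‖ ≤ (L i : ℝ) * ‖y‖ := by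
      have := (hv i).dist_le_mul y 0
      simpa [dist_eq_norm] using this
    calc ‖v i y‖ = ‖(v i y - v i 0) + v i 0‖ := by rw [sub_add_cancel]
      _ ≤ ‖v i y - v i 0‖ + ‖v i 0‖ := norm_add_le _ _
      _ ≤ ‖v i 0‖ + (L i : ℝ) * ‖y‖ := by linarith
  have hLleK : ∀ i, (L i : ℝ) ≤ Kr :=
    fun i => Finset.single_le_sum (f := fun j => ((L j : ℝ)))
      (fun j _ => (L j).coe_nonneg) (Finset.mem_univ i)
  have hvleA : ∀ i, ‖v i (0 : EuclideanSpace ℝ (Fin d))‖ ≤ A :=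
    fun i => Finset.single_le_sum (f := fun j => ‖v j 0‖)
      (fun j _ => norm_nonneg _) (Finset.mem_univ i)
  have hgrow_i : ∀ i y, ‖v i y‖ ≤ A + Kr * ‖y‖ := by
    intro i y
    have := hgrow_each i y
    have h2 := hvleA i
    have h3 := hLleK i
    nlinarith [norm_nonneg y]
  have hgrow_w : ∀ y, ‖∑ i, v i y‖ ≤ A + Kr * ‖y‖ := by
    intro y
    calc ‖∑ i, v i y‖ ≤ ∑ i, ‖v i y‖ := norm_sum_le _ _
      _ ≤ ∑ i, (‖v i 0‖ + (L i : ℝ) * ‖y‖) :=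
          Finset.sum_le_sum fun i _ => hgrow_each i y
      _ = A + Kr * ‖y‖ := by
          rw [Finset.sum_add_distrib, ← Finset.sum_mul, hAdef, hKrdef]
  have hw_lip : LipschitzWith K' (fun y => ∑ i, v i y) := by
    rw [lipschitzWith_iff_dist_le_mul]
    intro a b
    rw [dist_eq_norm, hK'coe]
    calc ‖∑ i, v i a - ∑ i, v i b‖ = ‖∑ i, (v i a - v i b)‖ := by
          rw [Finset.sum_sub_distrib]
      _ ≤ ∑ i, ‖v i a - v i b‖ := norm_sum_le _ _
      _ ≤ ∑ i, (L i : ℝ) * dist a b := Finset.sum_le_sum fun i _ => by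
            have := (hv i).dist_le_mul a b
            rw [dist_eq_norm] at this
            exact this
      _ = Kr * dist a b := by rw [← Finset.sum_mul, hKrdef]
  set T : ℝ := ((m : ℝ) + 2) * t with hTdef
  have hT0 : 0 ≤ T := by positivity
  set R : ℝ := gronwallBound R₀ Kr A T with hRdef
  have hR0 : 0 ≤ R := gb_nonneg hR₀nn hKr0 hA0 hT0
  set M : ℝ := A + Kr * R with hMdef
  have hM0 : 0 ≤ M := by positivity
  set C : ℝ := Kr * M * ((m : ℝ) + 1) with hCdef
  have hC0 : 0 ≤ C := by positivity
  -- invariance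
  have inv_gen : ∀ (u : EuclideanSpace ℝ (Fin d) → EuclideanSpace ℝ (Fin d)),
      (∀ y, ‖u y‖ ≤ A + Kr * ‖y‖) → ∀ (ψ : ℝ → EuclideanSpace ℝ (Fin d)),
      (∀ s, HasDerivAt ψ (u (ψ s)) s) → ∀ τ s : ℝ, 0 ≤ s →
      ‖ψ 0‖ ≤ gronwallBound R₀ Kr A τ → ‖ψ s‖ ≤ gronwallBound R₀ Kr A (τ + s) := by
    intro u hu ψ hψ τ s hs h0
    calc ‖ψ s‖ ≤ gronwallBound ‖ψ 0‖ Kr A s := flow_norm_gronwall hψ hu hs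
      _ ≤ gronwallBound (gronwallBound R₀ Kr A τ) Kr A s := gb_mono_δ h0 hs hKr0
      _ = gronwallBound R₀ Kr A (τ + s) := gb_add _ _ _ _ _
  have inv_Φ : ∀ (i) (z : EuclideanSpace ℝ (Fin d)) (τ s : ℝ), 0 ≤ s →
      ‖z‖ ≤ gronwallBound R₀ Kr A τ → ‖Φ i s z‖ ≤ gronwallBound R₀ Kr A (τ + s) := by
    intro i z τ s hs hz
    have := inv_gen (v i) (hgrow_i i) (fun u => Φ i u z) (hΦ i z) τ s hs
      (by show ‖Φ i 0 z‖ ≤ _; rw [hΦ0]; exact hz)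
    exact this
  have inv_φ : ∀ (z : EuclideanSpace ℝ (Fin d)) (τ s : ℝ), 0 ≤ s →
      ‖z‖ ≤ gronwallBound R₀ Kr A τ → ‖φ s z‖ ≤ gronwallBound R₀ Kr A (τ + s) := by
    intro z τ s hs hz
    have := inv_gen (fun y => ∑ i, v i y) hgrow_w (fun u => φ u z) (hφ z) τ s hs
      (by show ‖φ 0 z‖ ≤ _; rw [hφ0]; exact hz)
    exact this
  -- choose n
  obtain ⟨n, hn⟩ := exists_nat_gt (max 1 (C * t ^ 2 * exp (Kr * t) / ε))
  have hn1R : (1:ℝ) < n := lt_of_le_of_lt (le_max_left _ _) hn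
  have hn0 : 0 < n := Nat.cast_pos.1 (lt_trans one_pos hn1R)
  refine ⟨n, hn0, ?_⟩
  have hnR : (0:ℝ) < n := Nat.cast_pos.2 hn0
  set h : ℝ := t / (n:ℝ) with hhdef
  have hhpos : 0 < h := by positivity
  have hh0 : 0 ≤ h := hhpos.le
  have hht : h ≤ t := by
    rw [hhdef]
    exact div_le_self ht.le (Nat.one_le_cast.2 hn0)
  have hnh : (n:ℝ) * h = t := by rw [hhdef]; field_simp
  -- Lipschitz of one substep
  have lip_Φ : ∀ (i) (a b : EuclideanSpace ℝ (Fin d)),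
      ‖Φ i h a - Φ i h b‖ ≤ exp ((L i : ℝ) * h) * ‖a - b‖ := by
    intro i a b
    have := flow_lipschitz (hv i) (hΦ i a) (hΦ i b) hh0
    simp only [hΦ0] at this
    calc ‖Φ i h a - Φ i h b‖ ≤ ‖a - b‖ * exp ((L i : ℝ) * h) := this
      _ = exp ((L i : ℝ) * h) * ‖a - b‖ := mul_comm _ _
  -- Taylor bound for substeps
  have tay_Φ : ∀ (i) (z : EuclideanSpace ℝ (Fin d)) (τ : ℝ), 0 ≤ τ → τ + h ≤ T →
      ‖z‖ ≤ gronwallBound R₀ Kr A τ →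
      ‖Φ i h z - z - h • v i z‖ ≤ (L i : ℝ) * M * h ^ 2 ∧ ‖Φ i h z - z‖ ≤ M * h := by
    intro i z τ hτ hτT hz
    have hMs : ∀ s ∈ Icc (0:ℝ) h, ‖v i (Φ i s z)‖ ≤ M := by
      intro s hs
      have h1 : ‖Φ i s z‖ ≤ gronwallBound R₀ Kr A (τ + s) := inv_Φ i z τ s hs.1 hz
      have h2 : gronwallBound R₀ Kr A (τ + s) ≤ R :=
        gb_mono_x hR₀nn hKr0 hA0 (by linarith [hs.2]) (by linarith [hs.1])
      have h3 := hgrow_i i (Φ i s z)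
      rw [hMdef]
      nlinarith
    constructor
    · have := flow_taylor_bound (hv i) (hΦ i z) hh0 hMs
      simp only [hΦ0] at this
      exact this
    · have := flow_move_bound (hv i).continuous (hΦ i z) hh0 hMs
      simp only [hΦ0] at this
      exact this
  -- Taylor for the exact flow
  have tay_φ : ∀ (z : EuclideanSpace ℝ (Fin d)) (τ : ℝ), 0 ≤ τ → τ + h ≤ T →
      ‖z‖ ≤ gronwallBound R₀ Kr A τ →
      ‖φ h z - z - h • (∑ i, v i z)‖ ≤ Kr * M * h ^ 2 := by
    intro z τ hτ hτT hz
    have hMs : ∀ s ∈ Icc (0:ℝ) h, ‖∑ i, v i (φ s z)‖ ≤ M := by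
      intro s hs
      have h1 : ‖φ s z‖ ≤ gronwallBound R₀ Kr A (τ + s) := inv_φ z τ s hs.1 hz
      have h2 : gronwallBound R₀ Kr A (τ + s) ≤ R :=
        gb_mono_x hR₀nn hKr0 hA0 (by linarith [hs.2]) (by linarith [hs.1])
      have h3 := hgrow_w (φ s z)
      rw [hMdef]
      nlinarith
    have := flow_taylor_bound (u := fun y => ∑ i, v i y) hw_lip (hφ z) hh0 hMs
    rw [hK'coe] at this
    simp only [hφ0] at this
    exact this
  -- key local error for lists of substeps
  have key : ∀ l : List (Fin m), ∀ (y : EuclideanSpace ℝ (Fin d)) (τ : ℝ), 0 ≤ τ →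
      τ + ((l.length : ℝ) + 1) * h ≤ T → ‖y‖ ≤ gronwallBound R₀ Kr A τ →
      ‖List.foldl (fun z i => Φ i h z) y l - y - h • (l.map (fun i => v i y)).sum‖
        ≤ ((l.map fun i => (L i : ℝ)).sum * (l.length : ℝ)) * M * h ^ 2 := by
    intro l
    induction l with
    | nil => intro y τ hτ hτT hy; simp
    | cons i l' ih =>
      intro y τ hτ hτT hy
      have hlen : ((i :: l').length : ℝ) = (l'.length : ℝ) + 1 := by
        push_cast [List.length_cons]; ring
      have hτh : 0 ≤ τ + h := by linarith
      have hl'0 : (0:ℝ) ≤ (l'.length : ℝ) := Nat.cast_nonneg _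
      have hτT' : (τ + h) + ((l'.length : ℝ) + 1) * h ≤ T := by
        rw [hlen] at hτT; nlinarith
      have hτhT : τ + h ≤ T := by rw [hlen] at hτT; nlinarith
      set y₁ := Φ i h y with hy₁def
      have hy₁ : ‖y₁‖ ≤ gronwallBound R₀ Kr A (τ + h) := inv_Φ i y τ h hh0 hy
      have IH := ih y₁ (τ + h) hτh hτT' hy₁
      obtain ⟨htay, hmove⟩ := tay_Φ i y τ hτ hτhT hy
      have hdecomp : List.foldl (fun z j => Φ j h z) y (i :: l') - y -
            h • ((i :: l').map (fun j => v j y)).sum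
          = (List.foldl (fun z j => Φ j h z) y₁ l' - y₁ - h • (l'.map (fun j => v j y₁)).sum)
            + (y₁ - y - h • v i y)
            + h • ((l'.map (fun j => v j y₁)).sum - (l'.map (fun j => v j y)).sum) := by
        simp only [List.foldl_cons, List.map_cons, List.sum_cons, smul_add, smul_sub, hy₁def]
        abel
      have hthird : ‖(l'.map (fun j => v j y₁)).sum - (l'.map (fun j => v j y)).sum‖
          ≤ (l'.map fun j => (L j : ℝ)).sum * (M * h) := by
        have := list_sum_diff_bound l' (fun j => v j y₁) (fun j => v j y)
          (fun j => (L j : ℝ) * (M * h)) ?_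
        · rwa [list_sum_map_mul_right] at this
        · intro j
          have h1 : ‖v j y₁ - v j y‖ ≤ (L j : ℝ) * ‖y₁ - y‖ := by
            have := (hv j).dist_le_mul y₁ y
            simpa [dist_eq_norm] using this
          calc ‖v j y₁ - v j y‖ ≤ (L j : ℝ) * ‖y₁ - y‖ := h1
            _ ≤ (L j : ℝ) * (M * h) := by gcongr
      have hSL0 : (0:ℝ) ≤ (l'.map fun j => (L j : ℝ)).sum :=
        list_sum_map_nonneg _ _ fun j => (L j).coe_nonneg
      have hLi0 : (0:ℝ) ≤ (L i : ℝ) := (L i).coe_nonneg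
      calc ‖List.foldl (fun z j => Φ j h z) y (i :: l') - y -
            h • ((i :: l').map (fun j => v j y)).sum‖
          ≤ ‖List.foldl (fun z j => Φ j h z) y₁ l' - y₁ - h • (l'.map (fun j => v j y₁)).sum‖
            + ‖y₁ - y - h • v i y‖
            + ‖h • ((l'.map (fun j => v j y₁)).sum - (l'.map (fun j => v j y)).sum)‖ := by
            rw [hdecomp]; exact norm_add₃_le
        _ ≤ ((l'.map fun j => (L j : ℝ)).sum * (l'.length : ℝ)) * M * h ^ 2
            + (L i : ℝ) * M * h ^ 2
            + h * ((l'.map fun j => (L j : ℝ)).sum * (M * h)) := by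
            have hn3 : ‖h • ((l'.map (fun j => v j y₁)).sum - (l'.map (fun j => v j y)).sum)‖
                = h * ‖(l'.map (fun j => v j y₁)).sum - (l'.map (fun j => v j y)).sum‖ := by
              rw [norm_smul, Real.norm_eq_abs, abs_of_nonneg hh0]
            rw [hn3]
            exact add_le_add (add_le_add IH htay) (mul_le_mul_of_nonneg_left hthird hh0)
        _ ≤ (((i :: l').map fun j => (L j : ℝ)).sum * ((i :: l').length : ℝ)) * M * h ^ 2 := by
            simp only [List.map_cons, List.sum_cons, hlen]
            nlinarith [mul_nonneg (mul_nonneg hLi0 hl'0) (mul_nonneg hM0 (sq_nonneg h)),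
              sq_nonneg h]
  -- the split step map
  set S : EuclideanSpace ℝ (Fin d) → EuclideanSpace ℝ (Fin d) :=
    fun y => List.foldl (fun z i => Φ i h z) y (List.finRange m) with hSdef
  have hfinsumL : ((List.finRange m).map fun i => (L i : ℝ)).sum = Kr := by
    rw [← List.ofFn_eq_map, List.sum_ofFn, hKrdef]
  have hfinlen : ((List.finRange m).length : ℝ) = (m : ℝ) := by
    rw [List.length_finRange]
  have hfun : (fun y => (List.ofFn fun i => Φ i h).foldl (fun z f => f z) y) = S := by
    funext y
    rw [List.ofFn_eq_map, List.foldl_map, hSdef]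
  -- Lipschitz bound for S
  have lip_list : ∀ l : List (Fin m), ∀ a b : EuclideanSpace ℝ (Fin d),
      ‖List.foldl (fun z i => Φ i h z) a l - List.foldl (fun z i => Φ i h z) b l‖
        ≤ exp ((l.map fun i => (L i : ℝ)).sum * h) * ‖a - b‖ := by
    intro l
    induction l with
    | nil => intro a b; simp
    | cons i l' ih =>
      intro a b
      have harg : ((l'.map fun j => (L j : ℝ)).sum) * h + (L i : ℝ) * h
          = (((i :: l').map fun j => (L j : ℝ)).sum) * h := by
        simp only [List.map_cons, List.sum_cons]; ring
      calc ‖List.foldl (fun z j => Φ j h z) a (i :: l') -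
            List.foldl (fun z j => Φ j h z) b (i :: l')‖
          ≤ exp ((l'.map fun j => (L j : ℝ)).sum * h) * ‖Φ i h a - Φ i h b‖ := ih _ _
        _ ≤ exp ((l'.map fun j => (L j : ℝ)).sum * h) * (exp ((L i : ℝ) * h) * ‖a - b‖) :=
            mul_le_mul_of_nonneg_left (lip_Φ i a b) (exp_pos _).le
        _ = exp ((((i :: l').map fun j => (L j : ℝ)).sum) * h) * ‖a - b‖ := by
            rw [← mul_assoc, ← exp_add, harg]
  have lip_S : ∀ a b, ‖S a - S b‖ ≤ exp (Kr * h) * ‖a - b‖ := by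
    intro a b
    have := lip_list (List.finRange m) a b
    rwa [hfinsumL] at this
  -- combined local error
  have loc : ∀ (z : EuclideanSpace ℝ (Fin d)) (τ : ℝ), 0 ≤ τ →
      τ + ((m:ℝ) + 1) * h ≤ T → ‖z‖ ≤ gronwallBound R₀ Kr A τ →
      ‖φ h z - S z‖ ≤ C * h ^ 2 := by
    intro z τ hτ hτT hz
    have hmh0 : (0:ℝ) ≤ (m:ℝ) := Nat.cast_nonneg m
    have h1 := tay_φ z τ hτ (by nlinarith) hz
    have h2 := key (List.finRange m) z τ hτ (by rw [hfinlen]; exact hτT) hz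
    rw [hfinsumL, hfinlen] at h2
    have hsum : ((List.finRange m).map (fun i => v i z)).sum = ∑ i, v i z := by
      rw [← List.ofFn_eq_map, List.sum_ofFn]
    rw [hsum] at h2
    have h2' : ‖S z - z - h • (∑ i, v i z)‖ ≤ Kr * (m:ℝ) * M * h ^ 2 := by
      calc ‖S z - z - h • (∑ i, v i z)‖
          = ‖List.foldl (fun z i => Φ i h z) z (List.finRange m) - z - h • (∑ i, v i z)‖ := by
            rw [hSdef]
        _ ≤ (Kr * (m:ℝ)) * M * h ^ 2 := h2
        _ = Kr * (m:ℝ) * M * h ^ 2 := by ring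
    have hdec : φ h z - S z = (φ h z - z - h • (∑ i, v i z)) - (S z - z - h • (∑ i, v i z)) := by
      abel
    calc ‖φ h z - S z‖ ≤ ‖φ h z - z - h • (∑ i, v i z)‖ + ‖S z - z - h • (∑ i, v i z)‖ := by
          rw [hdec]; exact norm_sub_le _ _
      _ ≤ Kr * M * h ^ 2 + Kr * (m:ℝ) * M * h ^ 2 := add_le_add h1 h2'
      _ = C * h ^ 2 := by rw [hCdef]; ring
  -- semigroup property of the exact flow
  have semi : ∀ (z : EuclideanSpace ℝ (Fin d)) (a b : ℝ), 0 ≤ b →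
      φ (a + b) z = φ b (φ a z) := by
    intro z a b hb
    have hf : ∀ r : ℝ, HasDerivAt (fun r => φ (a + r) z)
        ((fun y => ∑ i, v i y) ((fun r => φ (a + r) z) r)) r := by
      intro r
      have h1 := hφ z (a + r)
      have h2 : HasDerivAt (fun r : ℝ => a + r) 1 r := (hasDerivAt_id r).const_add a
      have h3 := HasDerivAt.scomp (g₁ := fun u => φ u z) (h := fun r : ℝ => a + r)
        r h1 h2
      simpa [Function.comp_def] using h3
    have hg : ∀ r : ℝ, HasDerivAt (fun r => φ r (φ a z))
        ((fun y => ∑ i, v i y) ((fun r => φ r (φ a z)) r)) r := fun r => hφ (φ a z) r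
    have huniq := ODE_solution_unique (v := fun _ y => ∑ i, v i y) (K := K')
      (f := fun r => φ (a + r) z) (g := fun r => φ r (φ a z)) (a := 0) (b := b)
      (fun _ => hw_lip)
      ((flow_continuous (u := fun y => ∑ i, v i y) hf).continuousOn)
      (fun s _ => (hf s).hasDerivWithinAt)
      ((flow_continuous (u := fun y => ∑ i, v i y) hg).continuousOn)
      (fun s _ => (hg s).hasDerivWithinAt) (by simp [hφ0])
    have := huniq ⟨hb, le_refl b⟩
    simpa using this
  -- main error propagation
  have main : ∀ k : ℕ, k ≤ n → ∀ x ∈ Ω, ‖φ ((k:ℝ) * h) x - S^[k] x‖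
      ≤ C * h ^ 2 * (k:ℝ) * exp (Kr * ((k:ℝ) * h)) := by
    intro k
    induction k with
    | zero => intro _ x hx; simp [hφ0]
    | succ k ih =>
      intro hk1 x hx
      have hk : k ≤ n := Nat.le_of_succ_le hk1
      have IH := ih hk x hx
      have hk0 : (0:ℝ) ≤ (k:ℝ) := Nat.cast_nonneg k
      have hkh0 : 0 ≤ (k:ℝ) * h := by positivity
      have hk1R : ((k:ℝ) + 1) ≤ (n:ℝ) := by exact_mod_cast hk1
      have hzb : ‖φ ((k:ℝ) * h) x‖ ≤ gronwallBound R₀ Kr A ((k:ℝ) * h) := by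
        have := inv_φ x 0 ((k:ℝ) * h) hkh0
          (by rw [gronwallBound_x0]; exact hR₀ x hx)
        rwa [zero_add] at this
      have hcond : (k:ℝ) * h + ((m:ℝ) + 1) * h ≤ T := by
        have hmh : (m:ℝ) * h ≤ (m:ℝ) * t :=
          mul_le_mul_of_nonneg_left hht (Nat.cast_nonneg m)
        have hkk : ((k:ℝ) + 1) * h ≤ (n:ℝ) * h :=
          mul_le_mul_of_nonneg_right hk1R hh0
        rw [hnh] at hkk
        rw [hTdef]
        nlinarith
      have hloc := loc (φ ((k:ℝ) * h) x) ((k:ℝ) * h) hkh0 hcond hzb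
      have hlip := lip_S (φ ((k:ℝ) * h) x) (S^[k] x)
      rw [iterate_succ_apply']
      push_cast
      have hsg' : φ (((k:ℝ) + 1) * h) x = φ h (φ ((k:ℝ) * h) x) := by
        have harg : ((k:ℝ) + 1) * h = (k:ℝ) * h + h := by ring
        rw [harg]
        exact semi x ((k:ℝ) * h) h hh0
      rw [hsg']
      have htri : ‖φ h (φ ((k:ℝ) * h) x) - S (S^[k] x)‖
          ≤ ‖φ h (φ ((k:ℝ) * h) x) - S (φ ((k:ℝ) * h) x)‖
            + ‖S (φ ((k:ℝ) * h) x) - S (S^[k] x)‖ := by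
        have := dist_triangle (φ h (φ ((k:ℝ) * h) x)) (S (φ ((k:ℝ) * h) x)) (S (S^[k] x))
        simpa [dist_eq_norm] using this
      have hEq : exp (Kr * h) * exp (Kr * ((k:ℝ) * h)) = exp (Kr * (((k:ℝ) + 1) * h)) := by
        rw [← exp_add]; congr 1; ring
      have hone : (1:ℝ) ≤ exp (Kr * (((k:ℝ) + 1) * h)) := one_le_exp (by positivity)
      calc ‖φ h (φ ((k:ℝ) * h) x) - S (S^[k] x)‖
          ≤ ‖φ h (φ ((k:ℝ) * h) x) - S (φ ((k:ℝ) * h) x)‖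
            + ‖S (φ ((k:ℝ) * h) x) - S (S^[k] x)‖ := htri
        _ ≤ C * h ^ 2 + exp (Kr * h) * ‖φ ((k:ℝ) * h) x - S^[k] x‖ := add_le_add hloc hlip
        _ ≤ C * h ^ 2 + exp (Kr * h) * (C * h ^ 2 * (k:ℝ) * exp (Kr * ((k:ℝ) * h))) :=
            add_le_add_right (mul_le_mul_of_nonneg_left IH (exp_pos _).le) _
        _ = C * h ^ 2 + C * h ^ 2 * (k:ℝ) * (exp (Kr * h) * exp (Kr * ((k:ℝ) * h))) := by
            ring
        _ = C * h ^ 2 + C * h ^ 2 * (k:ℝ) * exp (Kr * (((k:ℝ) + 1) * h)) := by rw [hEq]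
        _ ≤ C * h ^ 2 * ((k:ℝ) + 1) * exp (Kr * (((k:ℝ) + 1) * h)) := by
            nlinarith [mul_nonneg (mul_nonneg hC0 (sq_nonneg h)) hk0,
              mul_nonneg hC0 (sq_nonneg h)]
  -- conclusion
  intro x hx
  have hfin := main n le_rfl x hx
  rw [hnh] at hfin
  rw [hfun]
  have heq : C * h ^ 2 * (n:ℝ) * exp (Kr * t) = C * t ^ 2 / (n:ℝ) * exp (Kr * t) := by
    rw [hhdef]
    field_simp
  have hlt : C * t ^ 2 / (n:ℝ) * exp (Kr * t) < ε := by
    have h2 : C * t ^ 2 * exp (Kr * t) / ε < n := lt_of_le_of_lt (le_max_right _ _) hn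
    rw [div_lt_iff₀ hε] at h2
    rw [div_mul_eq_mul_div, div_lt_iff₀ hnR]
    linarith
  calc ‖φ t x - S^[n] x‖ ≤ C * h ^ 2 * (n:ℝ) * exp (Kr * t) := hfin
    _ = C * t ^ 2 / (n:ℝ) * exp (Kr * t) := heq
    _ < ε := hlt
end
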